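/- Fix a fully-connected ReLU classifier D over classes C with input domain [0,1]^{k_0}, a class c' ∈ C, a target class c_t ≠ c', a perturbation function f_P : ℝ^{k_0} × ℝ^e → ℝ^{k_0}, and a perturbation range I ⊆ ℝ^e. Suppose the concrete bounds l_{m,k}, u_{m,k} are valid for ẑ_{m,k}(x) for every x ∈ [0,1]^{k_0}, and the concrete bounds l^p_{m,k}, u^p_{m,k} are valid for ẑ_{m,k}(f_P(x,ε)) for every x ∈ [0,1]^{k_0} and ε ∈ I. Consider the MIP feasible set of tuples (x, ε, δ, ẑ, z, a, ẑ^p, z^p, a^p) satisfying: x ∈ [0,1]^{k_0}, ε ∈ I, z_0 = x, z^p_0 = f_P(x, ε), the affine constraints and big-M constraints (with bounds l, u for the z-copy and l^p, u^p for the z^p-copy) at every hidden neuron of both copies, the constraints z_{L,c'} − z_{L,c''} > δ for every c'' ≠ c', and z^p_{L,c_t} − z^p_{L,c''} > 0 for every c'' ≠ c_t. Then the supremum of δ over this MIP feasible set equals the maximal globally non-robust bound targeting c_t, namely sup { δ ∈ ℝ : ∃ x ∈ [0,1]^{k_0}, ∃ ε ∈ I, C(x, c', D) > δ and C(f_P(x,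 ε), c_t, D) > 0 }. (Lemma 1, first part: an optimal solution to the MIP is the maximal globally non-robust bound targeting c_t.) -/

import Mathlib

/-!
Under the big-M constraints with valid bounds `l ≤ ẑ ≤ u`, the binary `a` selects which of the
two linear pieces of ReLU is active, so every feasible `z` equals `max ẑ 0`, and conversely the
true activation pattern `a = [ẑ ≥ 0]` is feasible. Hence the MIP's `z`- and `zᵖ`-copies are forced
to be the network's exact activations on `x` and `f_P(x, ε)`, and the margin constraints over the
finitely many classes `c'' ≠ c'` say exactly that the class confidence exceeds `δ`. The two sets of
admissible `δ` coincide, so do their suprema.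
-/

/-- Post-activation values of a fully-connected ReLU network:
`netPost k w b x m` is the vector of post-activation values of layer `m` on input `x`. -/
noncomputable def netPost (k : ℕ → ℕ)
    (w : ∀ m, Fin (k (m + 1)) → Fin (k m) → ℝ)
    (b : ∀ m, Fin (k (m + 1)) → ℝ)
    (x : Fin (k 0) → ℝ) : (m : ℕ) → Fin (k m) → ℝ
  | 0 => x
  | m + 1 => fun j => max (b m j + ∑ i, w m j i * netPost k w b x m i) 0

/-- Exact pre-activation value `ẑ_{m+1,j}(x)`. -/
noncomputable def netPre (k : ℕ → ℕ)
    (w : ∀ m, Fin (k (m + 1)) → Fin (k m) → ℝ)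
    (b : ∀ m, Fin (k (m + 1)) → ℝ)
    (x : Fin (k 0) → ℝ) (m : ℕ) (j : Fin (k (m + 1))) : ℝ :=
  b m j + ∑ i, w m j i * netPost k w b x m i

/-- Class confidence: `conf scores c' = min_{c'' ≠ c'} (scores c' - scores c'')`. -/
noncomputable def conf {n : ℕ} (scores : Fin n → ℝ) (c' : Fin n) : ℝ :=
  sInf {d : ℝ | ∃ c'', c'' ≠ c' ∧ d = scores c' - scores c''}

def BigMRelu (l u zh z a : ℝ) : Prop :=
  (a = 0 ∨ a = 1) ∧ z ≥ 0 ∧ z ≥ zh ∧ z ≤ u * a ∧ z ≤ zh - l * (1 - a)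

theorem BigMRelu.eq_max {l u zh z a : ℝ} (h : BigMRelu l u zh z a) : z = max zh 0 := by
  obtain ⟨ha | ha, hz0, hzh, hu, hl⟩ := h <;> subst ha
  · have hz : z = 0 := le_antisymm (by simpa using hu) hz0
    rw [hz, max_eq_right (hz ▸ hzh)]
  · have hz : z = zh := le_antisymm (by simpa using hl) hzh
    rw [hz, max_eq_left (hz ▸ hz0)]

theorem bigMRelu_max_of_mem_Icc {l u zh : ℝ} (hl : l ≤ zh) (hu : zh ≤ u) :
    BigMRelu l u zh (max zh 0) (if 0 ≤ zh then 1 else 0) := by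
  by_cases h : 0 ≤ zh
  · rw [if_pos h, max_eq_left h]
    exact ⟨Or.inr rfl, h, le_rfl, by linarith, by linarith⟩
  · rw [if_neg h, max_eq_right (not_le.1 h).le]
    exact ⟨Or.inl rfl, le_rfl, (not_le.1 h).le, by linarith, by linarith⟩

section Network

variable {k : ℕ → ℕ} {w : ∀ m, Fin (k (m + 1)) → Fin (k m) → ℝ} {b : ∀ m, Fin (k (m + 1)) → ℝ}

theorem eq_netPost_of_relu {L : ℕ} {z : ∀ m, Fin (k m) → ℝ}
    (hz : ∀ m, m < L → ∀ j, z (m + 1) j = max (b m j + ∑ i, w m j i * z m i) 0) :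
    ∀ m, m ≤ L → z m = netPost k w b (z 0) m
  | 0, _ => rfl
  | m + 1, hm => by
    funext j
    rw [hz m hm j, eq_netPost_of_relu hz m (Nat.le_of_succ_le hm)]
    rfl

theorem eq_netPost_of_bigMRelu {L : ℕ} {l u zhat a : ∀ m, Fin (k (m + 1)) → ℝ}
    {z : ∀ m, Fin (k m) → ℝ}
    (haff : ∀ m, m < L → ∀ j, zhat m j = b m j + ∑ i, w m j i * z m i)
    (hbigM : ∀ m, m < L → ∀ j, BigMRelu (l m j) (u m j) (zhat m j) (z (m + 1) j) (a m j)) :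
    z L = netPost k w b (z 0) L :=
  eq_netPost_of_relu (fun m hm j => haff m hm j ▸ (hbigM m hm j).eq_max) L le_rfl

theorem bigMRelu_netPost {L : ℕ} {l u : ∀ m, Fin (k (m + 1)) → ℝ} {x : Fin (k 0) → ℝ}
    (hbounds : ∀ m, m < L → ∀ j, l m j ≤ netPre k w b x m j ∧ netPre k w b x m j ≤ u m j) :
    ∀ m, m < L → ∀ j, BigMRelu (l m j) (u m j) (netPre k w b x m j)
      (netPost k w b x (m + 1) j) (if 0 ≤ netPre k w b x m j then 1 else 0) :=
  fun m hm j => bigMRelu_max_of_mem_Icc (hbounds m hm j).1 (hbounds m hm j).2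

end Network

theorem lt_conf_iff {n : ℕ} {scores : Fin n → ℝ} {c' c : Fin n} (hc : c ≠ c') {δ : ℝ} :
    δ < conf scores c' ↔ ∀ c'', c'' ≠ c' → δ < scores c' - scores c'' := by
  set S := {d : ℝ | ∃ c'', c'' ≠ c' ∧ d = scores c' - scores c''}
  have hfin : S.Finite :=
    (Set.finite_range fun c'' => scores c' - scores c'').subset
      (by rintro _ ⟨c'', -, rfl⟩; exact ⟨c'', rfl⟩)
  have hne : S.Nonempty := ⟨_, c, hc, rfl⟩
  constructor
  · intro h c'' hc''
    exact h.trans_le (csInf_le hfin.bddBelow ⟨c'', hc'', rfl⟩)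
  · intro h
    obtain ⟨c'', hc'', heq⟩ := hne.csInf_mem hfin
    rw [conf, heq]
    exact h c'' hc''

/-- Lemma 1, first part: the optimal value of the MIP equals the maximal globally
non-robust bound targeting `ct`. -/
theorem mip_optimum_eq_max_globally_nonrobust_bound
    (L : ℕ) (k : ℕ → ℕ) (e : ℕ)
    (w : ∀ m, Fin (k (m + 1)) → Fin (k m) → ℝ)
    (b : ∀ m, Fin (k (m + 1)) → ℝ)
    (c' ct : Fin (k L)) (hct : ct ≠ c')
    (fP : (Fin (k 0) → ℝ) → (Fin e → ℝ) → (Fin (k 0) → ℝ))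
    (I : Set (Fin e → ℝ))
    (l u lp up : ∀ m, Fin (k (m + 1)) → ℝ)
    (hbounds : ∀ x : Fin (k 0) → ℝ, (∀ i, x i ∈ Set.Icc (0 : ℝ) 1) →
      ∀ m, m < L → ∀ j, l m j ≤ netPre k w b x m j ∧ netPre k w b x m j ≤ u m j)
    (hboundsP : ∀ x : Fin (k 0) → ℝ, (∀ i, x i ∈ Set.Icc (0 : ℝ) 1) → ∀ ε ∈ I,
      ∀ m, m < L → ∀ j,
        lp m j ≤ netPre k w b (fP x ε) m j ∧ netPre k w b (fP x ε) m j ≤ up m j) :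
    sSup { δ : ℝ | ∃ (x : Fin (k 0) → ℝ) (ε : Fin e → ℝ)
          (zhat : ∀ m, Fin (k (m + 1)) → ℝ) (z : ∀ m, Fin (k m) → ℝ)
          (a : ∀ m, Fin (k (m + 1)) → ℝ)
          (zhatp : ∀ m, Fin (k (m + 1)) → ℝ) (zp : ∀ m, Fin (k m) → ℝ)
          (ap : ∀ m, Fin (k (m + 1)) → ℝ),
        (∀ i, x i ∈ Set.Icc (0 : ℝ) 1) ∧ ε ∈ I ∧
        z 0 = x ∧ zp 0 = fP x ε ∧
        (∀ m, m < L → ∀ j, zhat m j = b m j + ∑ i, w m j i * z m i) ∧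
        (∀ m, m < L → ∀ j, zhatp m j = b m j + ∑ i, w m j i * zp m i) ∧
        (∀ m, m < L → ∀ j,
          (a m j = 0 ∨ a m j = 1) ∧
          z (m + 1) j ≥ 0 ∧ z (m + 1) j ≥ zhat m j ∧
          z (m + 1) j ≤ u m j * a m j ∧
          z (m + 1) j ≤ zhat m j - l m j * (1 - a m j)) ∧
        (∀ m, m < L → ∀ j,
          (ap m j = 0 ∨ ap m j = 1) ∧
          zp (m + 1) j ≥ 0 ∧ zp (m + 1) j ≥ zhatp m j ∧
          zp (m + 1) j ≤ up m j * ap m j ∧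
          zp (m + 1) j ≤ zhatp m j - lp m j * (1 - ap m j)) ∧
        (∀ c'', c'' ≠ c' → z L c' - z L c'' > δ) ∧
        (∀ c'', c'' ≠ ct → zp L ct - zp L c'' > 0) }
    = sSup { δ : ℝ | ∃ x : Fin (k 0) → ℝ, (∀ i, x i ∈ Set.Icc (0 : ℝ) 1) ∧
        ∃ ε ∈ I, conf (netPost k w b x L) c' > δ ∧
          conf (netPost k w b (fP x ε) L) ct > 0 } := by
  
  congr 1
  ext δ
  constructor
  · rintro ⟨x, ε, zhat, z, a, zhatp, zp, ap, hx, hε, rfl, hzp0, haff, haffp, hbigM, hbigMp,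
      hmargin, hmarginp⟩
    have hzL := eq_netPost_of_bigMRelu haff hbigM
    have hzpL := eq_netPost_of_bigMRelu haffp hbigMp
    rw [hzp0] at hzpL
    refine ⟨z 0, hx, ε, hε, (lt_conf_iff hct).2 ?_, (lt_conf_iff hct.symm).2 ?_⟩
    · simpa only [← hzL] using hmargin
    · simpa only [← hzpL] using hmarginp
  · rintro ⟨x, hx, ε, hε, hconf, hconfp⟩
    exact ⟨x, ε, netPre k w b x, netPost k w b x,
      fun m j => if 0 ≤ netPre k w b x m j then 1 else 0,
      netPre k w b (fP x ε), netPost k w b (fP x ε),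
      fun m j => if 0 ≤ netPre k w b (fP x ε) m j then 1 else 0,
      hx, hε, rfl, rfl, fun _ _ _ => rfl, fun _ _ _ => rfl,
      bigMRelu_netPost (hbounds x hx), bigMRelu_netPost (hboundsP x hx ε hε),
      (lt_conf_iff hct).1 hconf, (lt_conf_iff hct.symm).1 hconfp⟩
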